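/- Let K ⊆ L be two finite Galois extensions of ℚ. Then the natural map ε : Cl(K) → Cl(L) sending the class of an ideal I to the class of I𝒪_L maps the Pólya group of K into the Pólya group of L. -/

import Mathlib

open NumberField
open scoped nonZeroDivisors

/-- The Pólya group of a number field `K`: the subgroup of the class group generated
by the classes of ambiguous (Galois-invariant) nonzero ideals. -/
noncomputable def PolyaGroup (K : Type*) [Field K] [NumberField K] : Subgroup (ClassGroup (𝓞 K)) :=
  Subgroup.closure {c | ∃ I : (Ideal (𝓞 K))⁰,
    (∀ σ : K ≃ₐ[ℚ] K, Ideal.map (galRestrict ℤ ℚ K (𝓞 K) σ) (I : Ideal (𝓞 K)) = I) ∧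
    ClassGroup.mk0 I = c}

/-!
Every `τ ∈ Gal(L/ℚ)` acts on the image of `𝓞 K` in `𝓞 L` through its restriction to the normal
field `K`, so the extension to `𝓞 L` of a `Gal(K/ℚ)`-invariant ideal is `Gal(L/ℚ)`-invariant.
Hence the extension homomorphism `Cl(K) → Cl(L)` maps the generators of `Po(K)` into `Po(L)`.
-/

section

variable {K L : Type*} [Field K] [NumberField K] [Field L] [NumberField L] [Algebra K L]
  [IsScalarTower ℚ K L]

lemma galRestrict_comp_algebraMap [Normal ℚ K] (τ : L ≃ₐ[ℚ] L) :
    (galRestrict ℤ ℚ L (𝓞 L) τ : 𝓞 L →+* 𝓞 L).comp (algebraMap (𝓞 K) (𝓞 L)) =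
      (algebraMap (𝓞 K) (𝓞 L)).comp (galRestrict ℤ ℚ K (𝓞 K) (τ.restrictNormal K)) := by
  refine RingHom.ext fun x ↦ RingOfIntegers.coe_injective (K := L) ?_
  simp only [RingHom.coe_comp, RingHom.coe_coe, Function.comp_apply,
    ← IsScalarTower.algebraMap_apply (𝓞 K) (𝓞 L) L, IsScalarTower.algebraMap_apply (𝓞 K) K L,
    algebraMap_galRestrict_apply, AlgEquiv.restrictNormal_commutes]

def Ideal.IsAmbiguous (I : Ideal (𝓞 K)) : Prop :=
  ∀ σ : K ≃ₐ[ℚ] K, I.map (galRestrict ℤ ℚ K (𝓞 K) σ) = I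

lemma Ideal.IsAmbiguous.map_algebraMap [Normal ℚ K] {I : Ideal (𝓞 K)} (hI : I.IsAmbiguous) :
    (I.map (algebraMap (𝓞 K) (𝓞 L))).IsAmbiguous := by
  intro τ
  calc (I.map (algebraMap (𝓞 K) (𝓞 L))).map (galRestrict ℤ ℚ L (𝓞 L) τ)
    _ = I.map ((galRestrict ℤ ℚ L (𝓞 L) τ : 𝓞 L →+* 𝓞 L).comp (algebraMap (𝓞 K) (𝓞 L))) :=
      Ideal.map_map _ _
    _ = (I.map (galRestrict ℤ ℚ K (𝓞 K) (τ.restrictNormal K))).map (algebraMap (𝓞 K) (𝓞 L)) := by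
      rw [galRestrict_comp_algebraMap]; exact (Ideal.map_map _ _).symm
    _ = I.map (algebraMap (𝓞 K) (𝓞 L)) := by rw [hI]

variable (K L) in
lemma polyaGroup_le_comap_extendedHom [Normal ℚ K] :
    PolyaGroup K ≤ (PolyaGroup L).comap (ClassGroup.extendedHom (𝓞 K) (𝓞 L)) := by
  refine (Subgroup.closure_le _).2 ?_
  rintro _ ⟨I, hI, rfl⟩
  rw [SetLike.mem_coe, Subgroup.mem_comap, ClassGroup.extendedHom_mk0]
  exact Subgroup.subset_closure ⟨ClassGroup.extendedIdeal (𝓞 K) (𝓞 L) I,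
    Ideal.IsAmbiguous.map_algebraMap (I := I.1) hI, rfl⟩

end

theorem polyaGroup_extension_mem_general
    (K L : Type*) [Field K] [NumberField K] [Field L] [NumberField L]
    [Algebra K L] [IsScalarTower ℚ K L] [IsGalois ℚ K] :
    ∀ x ∈ PolyaGroup K, ∀ I : (Ideal (𝓞 K))⁰, ClassGroup.mk0 I = x →
      ∀ J : (Ideal (𝓞 L))⁰,
        (J : Ideal (𝓞 L)) = Ideal.map (algebraMap (𝓞 K) (𝓞 L)) (I : Ideal (𝓞 K)) →
        ClassGroup.mk0 J ∈ PolyaGroup L := by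
  rintro x hx I rfl J hJ
  obtain rfl : J = ClassGroup.extendedIdeal (𝓞 K) (𝓞 L) I := Subtype.ext hJ
  rw [← ClassGroup.extendedHom_mk0]
  exact polyaGroup_le_comap_extendedHom K L hx

theorem polyaGroup_extension_mem
    (K L : Type*) [Field K] [NumberField K] [Field L] [NumberField L]
    [Algebra K L] [IsScalarTower ℚ K L] [IsGalois ℚ K] [IsGalois ℚ L] :
    ∀ x ∈ PolyaGroup K, ∀ I : (Ideal (𝓞 K))⁰, ClassGroup.mk0 I = x →
      ∀ J : (Ideal (𝓞 L))⁰,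
        (J : Ideal (𝓞 L)) = Ideal.map (algebraMap (𝓞 K) (𝓞 L)) (I : Ideal (𝓞 K)) →
        ClassGroup.mk0 J ∈ PolyaGroup L :=
  polyaGroup_extension_mem_general K L
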